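/- arXiv:1409.8168 — 2 statements merged into one kernel-verified Lean document; each statement's English description precedes it below -/
import Mathlib

section
/- Let D be a nonempty open connected subset of the real quaternions ℍ and let f : ℍ → ℍ. Suppose that for every q ∈ D the limit of h⁻¹·(f(q+h) − f(q)) as h → 0 (h ≠ 0, q + h ∈ D) exists in ℍ. Then there exist constants ν, λ ∈ ℍ such that f(q) = q·ν + λ for all q ∈ D. -/
open Quaternion Filter Topology Asymptotics

noncomputable section

/-- The imaginary unit `i` of the real quaternions. -/
def qI : ℍ[ℝ] := ⟨0, 1, 0, 0⟩
/-- The imaginary unit `j` of the real quaternions. -/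
def qJ : ℍ[ℝ] := ⟨0, 0, 1, 0⟩
/-- The imaginary unit `k` of the real quaternions. -/
def qK : ℍ[ℝ] := ⟨0, 0, 0, 1⟩

/-- Quaternion rotation `p ↦ μ p μ⁻¹`. -/
def qRot (μ p : ℍ[ℝ]) : ℍ[ℝ] := μ * p * μ⁻¹

/-- The left GHR derivative `∂f/∂q^μ` at `q`. -/
def lD (f : ℍ[ℝ] → ℍ[ℝ]) (μ q : ℍ[ℝ]) : ℍ[ℝ] :=
  (4 : ℍ[ℝ])⁻¹ * (fderiv ℝ f q 1 - fderiv ℝ f q qI * qRot μ qI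
    - fderiv ℝ f q qJ * qRot μ qJ - fderiv ℝ f q qK * qRot μ qK)

/-- The left conjugate GHR derivative `∂f/∂q^{μ*}` at `q`. -/
def lDc (f : ℍ[ℝ] → ℍ[ℝ]) (μ q : ℍ[ℝ]) : ℍ[ℝ] :=
  (4 : ℍ[ℝ])⁻¹ * (fderiv ℝ f q 1 + fderiv ℝ f q qI * qRot μ qI
    + fderiv ℝ f q qJ * qRot μ qJ + fderiv ℝ f q qK * qRot μ qK)

/-- The right GHR derivative `∂ᵣf/∂q^μ` at `q`. -/
def rD (f : ℍ[ℝ] → ℍ[ℝ]) (μ q : ℍ[ℝ]) : ℍ[ℝ] :=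
  (4 : ℍ[ℝ])⁻¹ * (fderiv ℝ f q 1 - qRot μ qI * fderiv ℝ f q qI
    - qRot μ qJ * fderiv ℝ f q qJ - qRot μ qK * fderiv ℝ f q qK)

/-- The right conjugate GHR derivative `∂ᵣf/∂q^{μ*}` at `q`. -/
def rDc (f : ℍ[ℝ] → ℍ[ℝ]) (μ q : ℍ[ℝ]) : ℍ[ℝ] :=
  (4 : ℍ[ℝ])⁻¹ * (fderiv ℝ f q 1 + qRot μ qI * fderiv ℝ f q qI
    + qRot μ qJ * fderiv ℝ f q qJ + qRot μ qK * fderiv ℝ f q qK)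

/-!
A limit of `h⁻¹ * (f (q + h) - f q)` makes `f` real differentiable with derivative
`h ↦ h * L q`. Let `ℂ` act on `ℍ` by left multiplication. On a slice `w ↦ q + u * w * c`
(`w : ℂ`) the function `u⁻¹ * f` is then holomorphic with derivative `c * L`, so `c * L` is
holomorphic there too, and the line derivative of `L` depends `ℂ`-linearly on the direction
within a slice. Every quaternion is conjugate to a complex one, so the slices `u * ℂ * u⁻¹`
through `1` show that the derivative of `L` in direction `e` is `e * A`. The slice `ℂ * j`
contains `j` and `i * j = k`, and comparing both descriptions there gives `i * A = -(i * A)`,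
so `A = 0`. Hence `L` is locally constant, thus constant on the connected set `D`, and
`f q - q * L` is constant as well.
-/

theorem hasFDerivAt_of_tendsto_inv_mul_sub {𝕜 𝔸 : Type*} [NontriviallyNormedField 𝕜]
    [NormedDivisionRing 𝔸] [NormedAlgebra 𝕜 𝔸] {f : 𝔸 → 𝔸} {D : Set 𝔸} {q L : 𝔸}
    (hD : D ∈ 𝓝 q)
    (h : Tendsto (fun h => h⁻¹ * (f (q + h) - f q)) (𝓝[{h | h ≠ 0 ∧ q + h ∈ D}] 0) (𝓝 L)) :
    HasFDerivAt f ((ContinuousLinearMap.mul 𝕜 𝔸).flip L) q := by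
  have hpunct : {h | h ≠ 0 ∧ q + h ∈ D} ∈ 𝓝[≠] (0 : 𝔸) :=
    inter_mem self_mem_nhdsWithin <| mem_nhdsWithin_of_mem_nhds <|
      (continuous_const.add continuous_id).tendsto' 0 q (add_zero q) hD
  have hsmall : (fun h => h⁻¹ * (f (q + h) - f q) - L) =o[𝓝[≠] 0] (fun _ => (1 : ℝ)) :=
    (isLittleO_one_iff ℝ).2 <| tendsto_sub_nhds_zero_iff.2 <|
      h.mono_left <| nhdsWithin_le_of_mem hpunct
  rw [hasFDerivAt_iff_isLittleO_nhds_zero, ← nhdsWithin_univ, ← Set.union_compl_self {(0 : 𝔸)},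
    ← Set.insert_eq, isLittleO_insert (by simp), ← isLittleO_norm_right]
  refine (((isBigO_refl (fun h : 𝔸 => h) _).norm_right).mul_isLittleO hsmall).congr' ?_ (by simp)
  filter_upwards [self_mem_nhdsWithin] with h (hh : h ≠ 0)
  simp [mul_sub, ← mul_assoc, mul_inv_cancel₀ hh]

section LineDerivZero

variable {E F : Type*} [NormedAddCommGroup E] [NormedSpace ℝ E] [NormedAddCommGroup F]
  [NormedSpace ℝ F] {s : Set E} {g : E → F}

theorem IsOpen.eventually_eq_of_hasLineDerivAt_zero (hs : IsOpen s)
    (hg : ∀ x ∈ s, ∀ v, HasLineDerivAt ℝ g 0 x v) {x : E} (hx : x ∈ s) :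
    ∀ᶠ y in 𝓝 x, g y = g x := by
  obtain ⟨r, hr, hball⟩ := Metric.isOpen_iff.mp hs x hx
  filter_upwards [Metric.ball_mem_nhds x hr] with y hy
  have hderiv : ∀ t ∈ Set.Icc (0 : ℝ) 1, HasDerivAt (fun t : ℝ => g (x + t • (y - x))) 0 t := by
    intro t ht
    have hxt := hball ((convex_ball x r).add_smul_sub_mem (Metric.mem_ball_self hr) hy ht)
    have hshift : HasDerivAt (fun τ : ℝ => g (x + t • (y - x) + τ • (y - x))) 0 (t - t) := by
      rw [sub_self]
      exact hg _ hxt (y - x)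
    convert hshift.comp_sub_const t t using 3 with τ
    module
  simpa using constant_of_has_deriv_right_zero
    (fun t ht => (hderiv t ht).continuousAt.continuousWithinAt)
    (fun t ht => (hderiv t (Set.Ico_subset_Icc_self ht)).hasDerivWithinAt) 1
    (Set.right_mem_Icc.2 zero_le_one)

theorem IsOpen.is_const_of_hasLineDerivAt_zero (hs : IsOpen s) (hs' : IsPreconnected s)
    (hg : ∀ x ∈ s, ∀ v, HasLineDerivAt ℝ g 0 x v) {x y : E} (hx : x ∈ s) (hy : y ∈ s) :
    g x = g y := by
  have hg' : ∀ x ∈ s, HasFDerivAt g (0 : E →L[ℝ] F) x := fun x hx =>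
    (hasFDerivAt_const (g x) x).congr_of_eventuallyEq
      (hs.eventually_eq_of_hasLineDerivAt_zero hg hx)
  exact hs.is_const_of_fderiv_eq_zero hs'
    (fun x hx => (hg' x hx).differentiableAt.differentiableWithinAt) (fun x hx => (hg' x hx).fderiv)
    hx hy

end LineDerivZero

theorem HasLineDerivAt.const_mul {𝕜 E 𝔸 : Type*} [NontriviallyNormedField 𝕜] [AddCommGroup E]
    [Module 𝕜 E] [NormedRing 𝔸] [NormedAlgebra 𝕜 𝔸] {f : E → 𝔸} {f' : 𝔸} {x v : E}
    (h : HasLineDerivAt 𝕜 f f' x v) (c : 𝔸) :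
    HasLineDerivAt 𝕜 (fun y => c * f y) (c * f') x v :=
  HasDerivAt.const_mul c h

theorem qJ_mul_qJ : qJ * qJ = -1 := by
  ext <;> simp [Quaternion.re_mul, Quaternion.imI_mul, Quaternion.imJ_mul, Quaternion.imK_mul] <;>
    simp [qJ]

theorem qI_mul_qJ : qI * qJ = qK := by
  ext <;> simp [Quaternion.re_mul, Quaternion.imI_mul, Quaternion.imJ_mul, Quaternion.imK_mul] <;>
    simp [qI, qJ, qK]

theorem qJ_mul_qK : qJ * qK = qI := by
  ext <;> simp [Quaternion.re_mul, Quaternion.imI_mul, Quaternion.imJ_mul, Quaternion.imK_mul] <;>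
    simp [qI, qJ, qK]

theorem qI_ne_zero : qI ≠ 0 := fun h => by simpa [qI] using congrArg (·.imI) h

theorem Quaternion.coeComplex_I : ((Complex.I : ℂ) : ℍ[ℝ]) = qI := by
  ext <;> simp [qI]

theorem Quaternion.norm_coeComplex (z : ℂ) : ‖(z : ℍ[ℝ])‖ = ‖z‖ := by
  rw [← sq_eq_sq₀ (norm_nonneg _) (norm_nonneg _), sq, sq, ← Quaternion.normSq_eq_norm_mul_self,
    Complex.norm_mul_self_eq_normSq, Quaternion.normSq_def', Complex.normSq_apply]
  simp [sq]

theorem Quaternion.exists_conj_coeComplex (e : ℍ[ℝ]) :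
    ∃ u : ℍ[ℝ], u ≠ 0 ∧ ∃ z : ℂ, u * z * u⁻¹ = e := by
  set b := √(e.imI ^ 2 + e.imJ ^ 2 + e.imK ^ 2)
  have hb : b ^ 2 = e.imI ^ 2 + e.imJ ^ 2 + e.imK ^ 2 := Real.sq_sqrt (by positivity)
  -- `u = b * i + e.im` satisfies `u * (b * i) = e.im * u`, since `e.im * e.im = -b ^ 2`;
  -- it vanishes only when `e` is already complex.
  by_cases hu : ((⟨0, b⟩ : ℂ) : ℍ[ℝ]) + e.im = 0
  · refine ⟨1, one_ne_zero, ⟨e.re, -b⟩, ?_⟩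
    have := congrArg (fun x : ℍ[ℝ] => (x.imI, x.imJ, x.imK)) hu
    simp only [Prod.mk.injEq] at this
    ext <;> simp at this ⊢ <;> linarith
  · refine ⟨_, hu, ⟨e.re, b⟩, ?_⟩
    rw [mul_inv_eq_iff_eq_mul₀ hu]
    ext <;> simp <;> linarith

instance : Module ℂ ℍ[ℝ] := Module.compHom ℍ[ℝ] Quaternion.ofComplex.toRingHom

theorem Quaternion.complex_smul_eq_coe_mul (z : ℂ) (x : ℍ[ℝ]) : z • x = (z : ℍ[ℝ]) * x := rfl

instance : IsScalarTower ℝ ℂ ℍ[ℝ] :=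
  ⟨fun r z x => by
    show Quaternion.ofComplex (r • z) * x = r • (Quaternion.ofComplex z * x)
    rw [map_smul, smul_mul_assoc]⟩

instance : NormedSpace ℂ ℍ[ℝ] where
  norm_smul_le z x := by
    rw [Quaternion.complex_smul_eq_coe_mul, norm_mul, Quaternion.norm_coeComplex]

section ComplexSlices

variable {D : Set ℍ[ℝ]} {f L : ℍ[ℝ] → ℍ[ℝ]}
  (hf : ∀ q ∈ D, HasFDerivAt f ((ContinuousLinearMap.mul ℝ ℍ[ℝ]).flip (L q)) q)
include hf

theorem hasDerivAt_complexSlice {q u : ℍ[ℝ]} (hu : u ≠ 0) (c : ℍ[ℝ]) {z : ℂ}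
    (hz : q + u * z * c ∈ D) :
    HasDerivAt (fun w : ℂ => u⁻¹ * f (q + u * w * c)) (c * L (q + u * z * c)) z := by
  let P : ℂ →L[ℝ] ℍ[ℝ] :=
    (ContinuousLinearMap.mulLeftRight ℝ ℍ[ℝ] u c).comp
      Quaternion.ofComplex.toLinearMap.toContinuousLinearMap
  have hP : HasFDerivAt (fun w : ℂ => q + u * w * c) P z := P.hasFDerivAt.const_add q
  rw [hasDerivAt_iff_hasFDerivAt]
  refine hasFDerivAt_of_restrictScalars ℝ (((hf _ hz).comp z hP).const_mul u⁻¹) ?_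
  refine ContinuousLinearMap.ext fun w => ?_
  show w • (c * L _) = u⁻¹ * (u * w * c * L _)
  simp only [Quaternion.complex_smul_eq_coe_mul, mul_assoc, inv_mul_cancel_left₀ hu]

theorem exists_hasLineDerivAt_complexSlice (hD : IsOpen D) {q u : ℍ[ℝ]} (hq : q ∈ D)
    (hu : u ≠ 0) (c : ℍ[ℝ]) :
    ∃ W : ℍ[ℝ], ∀ z : ℂ, HasLineDerivAt ℝ (fun p => c * L p) (z * W) q (u * z * c) := by
  let U := (fun w : ℂ => q + u * w * c) ⁻¹' D
  have hU : IsOpen U := hD.preimage <| continuous_const.add <|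
    (continuous_const.mul Quaternion.ofComplex.toLinearMap.continuous_of_finiteDimensional).mul
      continuous_const
  have h0 : (0 : ℂ) ∈ U := by simpa [U] using hq
  have hG : DifferentiableOn ℂ (fun w : ℂ => u⁻¹ * f (q + u * w * c)) U := fun w hw =>
    (hasDerivAt_complexSlice hf hu c hw).differentiableAt.differentiableWithinAt
  obtain ⟨W, hW⟩ : ∃ W, HasDerivAt (fun w : ℂ => c * L (q + u * w * c)) W 0 := by
    have hG' := (hG.deriv hU 0 h0).differentiableAt (hU.mem_nhds h0)
    refine ⟨_, hG'.hasDerivAt.congr_of_eventuallyEq ?_⟩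
    filter_upwards [hU.mem_nhds h0] with w hw using (hasDerivAt_complexSlice hf hu c hw).deriv.symm
  refine ⟨W, fun z => ?_⟩
  have hline : ∀ t : ℝ, q + u * ((0 + t • z : ℂ) : ℍ[ℝ]) * c = q + t • (u * z * c) := fun t => by
    show q + u * Quaternion.ofComplex (0 + t • z) * c = _
    rw [zero_add, map_smul, mul_smul_comm, smul_mul_assoc]
    rfl
  have := (hW.hasFDerivAt.restrictScalars ℝ).hasLineDerivAt z
  unfold HasLineDerivAt at this ⊢
  simp only [hline] at this
  exact this

theorem exists_forall_hasLineDerivAt_mul (hD : IsOpen D) {q : ℍ[ℝ]} (hq : q ∈ D) :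
    ∃ A : ℍ[ℝ], ∀ e : ℍ[ℝ], HasLineDerivAt ℝ L (e * A) q e := by
  obtain ⟨A, hA⟩ := exists_hasLineDerivAt_complexSlice hf hD hq one_ne_zero 1
  have h1 : HasLineDerivAt ℝ L A q 1 := by simpa using hA 1
  refine ⟨A, fun e => ?_⟩
  obtain ⟨u, hu, z, rfl⟩ := Quaternion.exists_conj_coeComplex e
  obtain ⟨W, hW⟩ := exists_hasLineDerivAt_complexSlice hf hD hq hu u⁻¹
  have hWA : W = u⁻¹ * A := by
    refine HasLineDerivAt.unique ?_ (h1.const_mul u⁻¹)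
    simpa [mul_inv_cancel₀ hu] using hW 1
  simpa [hWA, mul_assoc, mul_inv_cancel_left₀ hu] using (hW z).const_mul u

theorem hasLineDerivAt_zero_of_hasFDerivAt_mulRight (hD : IsOpen D) {q : ℍ[ℝ]} (hq : q ∈ D)
    (e : ℍ[ℝ]) : HasLineDerivAt ℝ L 0 q e := by
  obtain ⟨A, hA⟩ := exists_forall_hasLineDerivAt_mul hf hD hq
  obtain ⟨W, hW⟩ := exists_hasLineDerivAt_complexSlice hf hD hq one_ne_zero qJ
  have hW1 : W = qJ * (qJ * A) :=
    (by simpa using hW 1 : HasLineDerivAt ℝ _ W q qJ).unique ((hA qJ).const_mul qJ)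
  have hWI : qI * W = qJ * (qK * A) :=
    (by simpa [Quaternion.coeComplex_I, qI_mul_qJ] using hW Complex.I :
      HasLineDerivAt ℝ _ (qI * W) q qK).unique ((hA qK).const_mul qJ)
  rw [hW1, ← mul_assoc qJ, qJ_mul_qJ, ← mul_assoc qJ, qJ_mul_qK, neg_one_mul, mul_neg] at hWI
  have hIA : (2 : ℝ) • (qI * A) = 0 := by
    rw [two_smul]
    nth_rw 1 [← hWI]
    exact neg_add_cancel _
  have hA0 : A = 0 :=
    (mul_eq_zero.mp ((smul_eq_zero.mp hIA).resolve_left two_ne_zero)).resolve_left qI_ne_zero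
  simpa [hA0] using hA e

end ComplexSlices

theorem right_quotient_limit_implies_affine
    (D : Set ℍ[ℝ]) (hD : IsOpen D) (hDconn : IsConnected D) (f : ℍ[ℝ] → ℍ[ℝ])
    (hlim : ∀ q ∈ D, ∃ L : ℍ[ℝ],
      Tendsto (fun h : ℍ[ℝ] => h⁻¹ * (f (q + h) - f q))
        (𝓝[{h : ℍ[ℝ] | h ≠ 0 ∧ q + h ∈ D}] 0) (𝓝 L)) :
    ∃ ν lam : ℍ[ℝ], ∀ q ∈ D, f q = q * ν + lam := by
  obtain ⟨x₀, hx₀⟩ := hDconn.nonempty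
  choose! L hL using hlim
  have hf : ∀ q ∈ D, HasFDerivAt f ((ContinuousLinearMap.mul ℝ ℍ[ℝ]).flip (L q)) q :=
    fun q hq => hasFDerivAt_of_tendsto_inv_mul_sub (hD.mem_nhds hq) (hL q hq)
  have hLconst : ∀ q ∈ D, L q = L x₀ := fun q hq =>
    hD.is_const_of_hasLineDerivAt_zero hDconn.isPreconnected
      (fun p hp => hasLineDerivAt_zero_of_hasFDerivAt_mulRight hf hD hp) hq hx₀
  let T := (ContinuousLinearMap.mul ℝ ℍ[ℝ]).flip (L x₀)
  have hfT : ∀ q ∈ D, HasFDerivAt f T q := fun q hq => by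
    simpa only [hLconst q hq] using hf q hq
  obtain ⟨lam, hlam⟩ := hD.exists_eq_add_of_fderiv_eq hDconn.isPreconnected
    (fun q hq => (hfT q hq).differentiableAt.differentiableWithinAt)
    T.differentiable.differentiableOn
    (fun q hq => (hfT q hq).fderiv.trans T.fderiv.symm)
  exact ⟨L x₀, lam, hlam⟩

end
end

section
/- Let g : ℍ → ℍ be real-(Fréchet-)differentiable at q ∈ ℍ, let f : ℍ → ℍ be real-(Fréchet-)differentiable at g(q), let ν ∈ ℍ be nonzero, and let v ∈ {1, i, j, k}. Then the directional derivative of f ∘ g at q along v satisfies D_v(f∘g)(q) = Σ_{η ∈ {1,i,j,k}} (∂f/∂p^{νη})(g(q)) · D_v(g^{νη})(q), where g^{νη} denotes the function p ↦ (νη) g(p) (νη)⁻¹, D_v denotes the real Fréchet derivative applied to the direction v, and (∂f/∂p^{νη})(g(q)) is the left GHR derivative of f at g(q) with respect to the nonzero quaternion νη. -/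
/-! Write `L` for the real differential of `f` at `g q` and `ρ_μ x = μ x μ⁻¹`. By the chain rule
and real-linearity of `ρ_μ`, both sides only involve `L` and `w = D_v g(q)`. Since `ρ_μ` is
multiplicative, `lD f μ · ρ_μ w = ¼ (L 1 · ρ_μ w - Σ_e L e · ρ_μ (e w))` over `e ∈ {i, j, k}`, and
averaging `ρ_{νη} x` over `η ∈ {1, i, j, k}` gives `Re x`. So the sum collapses to
`Re w · L 1 + imI w · L i + imJ w · L j + imK w · L k = L w`. -/

open Quaternion Filter Topology Asymptotics

noncomputable section

@[simp] lemma qI_re : qI.re = 0 := rfl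
@[simp] lemma qI_imI : qI.imI = 1 := rfl
@[simp] lemma qI_imJ : qI.imJ = 0 := rfl
@[simp] lemma qI_imK : qI.imK = 0 := rfl
@[simp] lemma qJ_re : qJ.re = 0 := rfl
@[simp] lemma qJ_imI : qJ.imI = 0 := rfl
@[simp] lemma qJ_imJ : qJ.imJ = 1 := rfl
@[simp] lemma qJ_imK : qJ.imK = 0 := rfl
@[simp] lemma qK_re : qK.re = 0 := rfl
@[simp] lemma qK_imI : qK.imI = 0 := rfl
@[simp] lemma qK_imJ : qK.imJ = 0 := rfl
@[simp] lemma qK_imK : qK.imK = 1 := rfl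

lemma qRot_mul_qRot (μ x y : ℍ[ℝ]) : qRot μ x * qRot μ y = qRot μ (x * y) := by
  rcases eq_or_ne μ 0 with rfl | hμ
  · simp [qRot]
  · simp [qRot, mul_assoc, inv_mul_cancel_left₀ hμ]

lemma qRot_qRot (μ η x : ℍ[ℝ]) : qRot μ (qRot η x) = qRot (μ * η) x := by
  simp [qRot, mul_inv_rev, mul_assoc]

lemma qRot_add (μ x y : ℍ[ℝ]) : qRot μ (x + y) = qRot μ x + qRot μ y := by
  simp [qRot, mul_add, add_mul]

lemma qRot_smul_one {μ : ℍ[ℝ]} (hμ : μ ≠ 0) (r : ℝ) : qRot μ (r • 1) = r • 1 := by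
  simp [qRot, hμ]

lemma sum_qRot_basis (x : ℍ[ℝ]) :
    qRot 1 x + qRot qI x + qRot qJ x + qRot qK x = (4 * x.re) • 1 := by
  ext <;> simp [qRot, Quaternion.inv_def, Quaternion.normSq_def']
  ring

lemma sum_qRot_mul_basis {ν : ℍ[ℝ]} (hν : ν ≠ 0) (x : ℍ[ℝ]) :
    qRot (ν * 1) x + qRot (ν * qI) x + qRot (ν * qJ) x + qRot (ν * qK) x = (4 * x.re) • 1 := by
  simp only [← qRot_qRot, ← qRot_add, sum_qRot_basis, qRot_smul_one hν]

lemma re_smul_one_add_imI_smul_qI_add_imJ_smul_qJ_add_imK_smul_qK (w : ℍ[ℝ]) :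
    w.re • 1 + w.imI • qI + w.imJ • qJ + w.imK • qK = w := by
  ext <;> simp

lemma lD_mul_qRot (f : ℍ[ℝ] → ℍ[ℝ]) (μ p w : ℍ[ℝ]) :
    lD f μ p * qRot μ w = (4 : ℍ[ℝ])⁻¹ * (fderiv ℝ f p 1 * qRot μ w
      - fderiv ℝ f p qI * qRot μ (qI * w) - fderiv ℝ f p qJ * qRot μ (qJ * w)
      - fderiv ℝ f p qK * qRot μ (qK * w)) := by
  simp only [lD, mul_assoc, sub_mul, qRot_mul_qRot]

theorem fderiv_apply_eq_sum_lD_mul_qRot (f : ℍ[ℝ] → ℍ[ℝ]) {ν : ℍ[ℝ]} (hν : ν ≠ 0) (p w : ℍ[ℝ]) :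
    fderiv ℝ f p w
      = lD f (ν * 1) p * qRot (ν * 1) w + lD f (ν * qI) p * qRot (ν * qI) w
        + lD f (ν * qJ) p * qRot (ν * qJ) w + lD f (ν * qK) p * qRot (ν * qK) w := by
  set L := fderiv ℝ f p
  set S := fun x => qRot (ν * 1) x + qRot (ν * qI) x + qRot (ν * qJ) x + qRot (ν * qK) x
  have regroup : lD f (ν * 1) p * qRot (ν * 1) w + lD f (ν * qI) p * qRot (ν * qI) w
        + lD f (ν * qJ) p * qRot (ν * qJ) w + lD f (ν * qK) p * qRot (ν * qK) w
      = (4 : ℍ[ℝ])⁻¹ * (L 1 * S w - L qI * S (qI * w) - L qJ * S (qJ * w) - L qK * S (qK * w)) := by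
    simp only [lD_mul_qRot, S]
    noncomm_ring
  have hS : ∀ x, S x = (4 * x.re) • 1 := sum_qRot_mul_basis hν
  have h4 : (4 : ℍ[ℝ])⁻¹ = (4 : ℝ)⁻¹ • 1 := by
    rw [Algebra.smul_def, mul_one, map_inv₀, map_ofNat]
  rw [regroup, hS, hS, hS, hS, h4]
  conv_lhs => rw [← re_smul_one_add_imI_smul_qI_add_imJ_smul_qJ_add_imK_smul_qK w]
  simp only [map_add, map_smul, mul_smul_comm, smul_mul_assoc, mul_one, one_mul, re_mul,
    qI_re, qI_imI, qI_imJ, qI_imK, qJ_re, qJ_imI, qJ_imJ, qJ_imK, qK_re, qK_imI, qK_imJ, qK_imK]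
  module

lemma fderiv_qRot_comp {g : ℍ[ℝ] → ℍ[ℝ]} {q : ℍ[ℝ]} (hg : DifferentiableAt ℝ g q) (μ v : ℍ[ℝ]) :
    fderiv ℝ (fun p => qRot μ (g p)) q v = qRot μ (fderiv ℝ g q v) := by
  simp only [qRot]
  rw [((hg.hasFDerivAt.const_mul μ).mul_const' μ⁻¹).fderiv]
  simp

theorem left_GHR_chain_rule_directional_general
    (f g : ℍ[ℝ] → ℍ[ℝ]) (q ν v : ℍ[ℝ])
    (hg : DifferentiableAt ℝ g q) (hf : DifferentiableAt ℝ f (g q))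
    (hν : ν ≠ 0) :
    fderiv ℝ (f ∘ g) q v
      = lD f (ν * 1) (g q) * fderiv ℝ (fun p => qRot (ν * 1) (g p)) q v
        + lD f (ν * qI) (g q) * fderiv ℝ (fun p => qRot (ν * qI) (g p)) q v
        + lD f (ν * qJ) (g q) * fderiv ℝ (fun p => qRot (ν * qJ) (g p)) q v
        + lD f (ν * qK) (g q) * fderiv ℝ (fun p => qRot (ν * qK) (g p)) q v := by
  rw [fderiv_comp q hf hg, ContinuousLinearMap.comp_apply,
    fderiv_apply_eq_sum_lD_mul_qRot f hν]
  simp only [fderiv_qRot_comp hg]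

theorem left_GHR_chain_rule_directional
    (f g : ℍ[ℝ] → ℍ[ℝ]) (q ν v : ℍ[ℝ])
    (hg : DifferentiableAt ℝ g q) (hf : DifferentiableAt ℝ f (g q))
    (hν : ν ≠ 0) (hv : v = 1 ∨ v = qI ∨ v = qJ ∨ v = qK) :
    fderiv ℝ (f ∘ g) q v
      = lD f (ν * 1) (g q) * fderiv ℝ (fun p => qRot (ν * 1) (g p)) q v
        + lD f (ν * qI) (g q) * fderiv ℝ (fun p => qRot (ν * qI) (g p)) q v
        + lD f (ν * qJ) (g q) * fderiv ℝ (fun p => qRot (ν * qJ) (g p)) q v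
        + lD f (ν * qK) (g q) * fderiv ℝ (fun p => qRot (ν * qK) (g p)) q v :=
  left_GHR_chain_rule_directional_general f g q ν v hg hf hν

end
end
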